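/- arXiv:2508.08807 — 3 statements merged into one kernel-verified Lean document; each statement's English description precedes it below -/
import Mathlib

section
/- Let P = D_v^{-1} Hᵀ W D_e^{-1} H with H, W, D_e, D_v as above, let α ∈ [0,1), and define Π^(t) via Π^(0) = I_n, Π^(t+1) = α I_n + (1−α) Π^(t) P. Then for every natural number t, the matrix Π^(t) D_v^{-1} is symmetric. -/
/-! The walk matrix `P = D_v⁻¹ S` with `S = Hᵀ W D_e⁻¹ H` symmetric satisfies
`P D_v⁻¹ = D_v⁻¹ S D_v⁻¹`, which is symmetric. Every `Π^(t)` is a polynomial in `P`, so it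
commutes with `P`, and then symmetry of `Π^(t) D_v⁻¹` propagates along the recursion:
`(Π P D)ᵀ = (P Π D)ᵀ = Π D Pᵀ = Π (P D)ᵀ = Π P D` for symmetric `D`. -/

open Matrix

namespace Matrix

variable {ι κ R : Type*} [Fintype ι] [CommSemiring R]

theorem IsSymm.mul_mul_transpose {S : Matrix ι ι R} (hS : S.IsSymm) [Fintype κ]
    (A : Matrix κ ι R) : (A * S * Aᵀ).IsSymm := by
  simp only [IsSymm, transpose_mul, transpose_transpose, hS.eq, Matrix.mul_assoc]

theorem isSymm_diagonal_mul_transpose_mul_diagonal_mul_mul_diagonal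
    [DecidableEq ι] [Fintype κ] [DecidableEq κ] (d : ι → R) (H : Matrix κ ι R) (w : κ → R) :
    (diagonal d * Hᵀ * diagonal w * H * diagonal d).IsSymm := by
  have hconj : diagonal d * Hᵀ * diagonal w * H * diagonal d =
      diagonal d * Hᵀ * diagonal w * (diagonal d * Hᵀ)ᵀ := by
    simp only [transpose_mul, transpose_transpose, diagonal_transpose, Matrix.mul_assoc]
  rw [hconj]
  exact (isSymm_diagonal w).mul_mul_transpose _

theorem IsSymm.mul_mul_of_commute {A P D : Matrix ι ι R} (hD : D.IsSymm)
    (hAD : (A * D).IsSymm) (hPD : (P * D).IsSymm) (hAP : Commute A P) :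
    (A * P * D).IsSymm := by
  have hDP : D * Pᵀ = P * D := by rw [← hD.eq, ← transpose_mul, hD.eq, hPD.eq]
  calc (A * P * D)ᵀ = (P * (A * D))ᵀ := by rw [hAP.eq, Matrix.mul_assoc]
    _ = A * (D * Pᵀ) := by rw [transpose_mul, hAD.eq, Matrix.mul_assoc]
    _ = A * P * D := by rw [hDP, Matrix.mul_assoc]

variable [DecidableEq ι] {Pi : ℕ → Matrix ι ι R} {P : Matrix ι ι R} {a b : R}

theorem commute_of_affine_rec (h0 : Pi 0 = 1) (hrec : ∀ t, Pi (t + 1) = a • 1 + b • (Pi t * P))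
    (t : ℕ) : Commute (Pi t) P := by
  induction t with
  | zero => exact h0 ▸ Commute.one_left P
  | succ t ih =>
    rw [hrec t]
    exact ((Commute.one_left P).smul_left a).add_left ((ih.mul_left (Commute.refl P)).smul_left b)

theorem isSymm_mul_of_affine_rec {D : Matrix ι ι R} (hD : D.IsSymm) (hPD : (P * D).IsSymm)
    (h0 : Pi 0 = 1) (hrec : ∀ t, Pi (t + 1) = a • 1 + b • (Pi t * P)) (t : ℕ) :
    (Pi t * D).IsSymm := by
  induction t with
  | zero => rwa [h0, Matrix.one_mul]
  | succ t ih =>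
    rw [hrec t, Matrix.add_mul, smul_mul_assoc, smul_mul_assoc, Matrix.one_mul]
    exact (hD.smul a).add
      ((hD.mul_mul_of_commute ih hPD (commute_of_affine_rec h0 hrec t)).smul b)

end Matrix

theorem rwr_mul_inv_degree_isSymm_general
    (m n : ℕ) (H : Matrix (Fin (m + n)) (Fin n) ℝ)
    (w de : Fin (m + n) → ℝ) (dv : Fin n → ℝ)
    (P : Matrix (Fin n) (Fin n) ℝ)
    (hP : P = diagonal (fun j => (dv j)⁻¹) * Hᵀ * diagonal w *
        diagonal (fun i => (de i)⁻¹) * H)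
    (α : ℝ)
    (Pi : ℕ → Matrix (Fin n) (Fin n) ℝ)
    (h0 : Pi 0 = 1)
    (hrec : ∀ t, Pi (t + 1) = α • (1 : Matrix (Fin n) (Fin n) ℝ) + (1 - α) • (Pi t * P)) :
    ∀ t : ℕ, (Pi t * diagonal (fun j => (dv j)⁻¹)).IsSymm := by
  have hPD : (P * diagonal (fun j => (dv j)⁻¹)).IsSymm := by
    rw [hP, Matrix.mul_assoc _ (diagonal w), diagonal_mul_diagonal]
    exact isSymm_diagonal_mul_transpose_mul_diagonal_mul_mul_diagonal _ H _
  exact isSymm_mul_of_affine_rec (isSymm_diagonal _) hPD h0 hrec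

theorem rwr_mul_inv_degree_isSymm
    (m n : ℕ) (H : Matrix (Fin (m + n)) (Fin n) ℝ)
    (w de : Fin (m + n) → ℝ) (dv : Fin n → ℝ)
    (hw : ∀ i, 0 < w i) (hde : ∀ i, 0 < de i) (hdv : ∀ j, 0 < dv j)
    (P : Matrix (Fin n) (Fin n) ℝ)
    (hP : P = diagonal (fun j => (dv j)⁻¹) * Hᵀ * diagonal w *
        diagonal (fun i => (de i)⁻¹) * H)
    (α : ℝ) (hα : 0 ≤ α) (hα1 : α < 1)
    (Pi : ℕ → Matrix (Fin n) (Fin n) ℝ)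
    (h0 : Pi 0 = 1)
    (hrec : ∀ t, Pi (t + 1) = α • (1 : Matrix (Fin n) (Fin n) ℝ) + (1 - α) • (Pi t * P)) :
    ∀ t : ℕ, (Pi t * diagonal (fun j => (dv j)⁻¹)).IsSymm :=
  rwr_mul_inv_degree_isSymm_general m n H w de dv P hP α Pi h0 hrec
end

section
/- Let P = D_v^{-1} Hᵀ W D_e^{-1} H, α ∈ [0,1), and suppose the limit Π = Σ_{i=0}^∞ α(1−α)^i P^i exists (e.g., as the limit of partial sums, which converge since P is row-stochastic). Then Π D_v^{-1} is symmetric; equivalently, for all i, j: π(v_i,v_j)/d(v_j) = π(v_j,v_i)/d(v_i), where π(v_i,v_j) = Π[i,j] and d(v_k) = D_v[k,k]. -/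
/-!
With `Q = D_v⁻¹` and `S = Hᵀ W D_e⁻¹ H`, the transition matrix is `P = Q S` with `Q` and `S`
symmetric, so `(P ^ k Q)ᵀ = Q (S Q) ^ k = P ^ k Q`. Every partial sum
of the restart series, multiplied by `Q`, is therefore symmetric, and so is their entrywise limit
`Π Q`.
-/

open Matrix Filter Topology

namespace Matrix

variable {ι α β : Type*}

theorem isSymm_transpose_mul_diagonal_mul {κ : Type*} [Fintype κ] [DecidableEq κ]
    [CommSemiring α] (A : Matrix κ ι α) (d : κ → α) : (Aᵀ * diagonal d * A).IsSymm := by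
  rw [IsSymm, transpose_mul, transpose_mul, diagonal_transpose, transpose_transpose,
    Matrix.mul_assoc]

theorem IsSymm.mul_pow_mul [Fintype ι] [DecidableEq ι] [CommSemiring α] {D S : Matrix ι ι α}
    (hD : D.IsSymm) (hS : S.IsSymm) (k : ℕ) : ((D * S) ^ k * D).IsSymm := by
  rw [IsSymm, transpose_mul, transpose_pow, transpose_mul, hD.eq, hS.eq, _root_.mul_pow_mul]

theorem isSymm_sum_smul_mul [Fintype ι] [CommSemiring α] {s : Finset β} (c : β → α)
    {M : β → Matrix ι ι α} {D : Matrix ι ι α} (hM : ∀ k, (M k * D).IsSymm) :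
    ((∑ k ∈ s, c k • M k) * D).IsSymm := by
  simp only [IsSymm, Finset.sum_mul, smul_mul, transpose_sum, transpose_smul, (hM _).eq]

theorem isSymm_of_tendsto [TopologicalSpace α] [T2Space α] {l : Filter β} [l.NeBot]
    {A : β → Matrix ι ι α} {L : Matrix ι ι α} (hA : ∀ T, (A T).IsSymm)
    (hL : ∀ i j, Tendsto (fun T => A T i j) l (𝓝 (L i j))) : L.IsSymm :=
  IsSymm.ext fun i j => tendsto_nhds_unique (hL j i) ((hL i j).congr fun T => (hA T).apply j i)

end Matrix

theorem rwr_limit_mul_inv_degree_isSymm_general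
    (m n : ℕ) (H : Matrix (Fin (m + n)) (Fin n) ℝ)
    (w de : Fin (m + n) → ℝ) (dv : Fin n → ℝ)
    (P : Matrix (Fin n) (Fin n) ℝ)
    (hP : P = diagonal (fun j => (dv j)⁻¹) * Hᵀ * diagonal w *
        diagonal (fun i => (de i)⁻¹) * H)
    (α : ℝ)
    (Pl : Matrix (Fin n) (Fin n) ℝ)
    (hlim : ∀ i j, Tendsto
      (fun T : ℕ => ∑ k ∈ Finset.range T, α * (1 - α) ^ k * (P ^ k) i j)
      atTop (nhds (Pl i j))) :
    (Pl * diagonal (fun j => (dv j)⁻¹)).IsSymm ∧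
      ∀ i j : Fin n, Pl i j / dv j = Pl j i / dv i := by
  set Q := diagonal fun j => (dv j)⁻¹
  have hPQS : P = Q * (Hᵀ * diagonal (fun i => w i * (de i)⁻¹) * H) := by
    rw [hP, ← diagonal_mul_diagonal]
    simp only [Matrix.mul_assoc]
  have hPowQ (k : ℕ) : (P ^ k * Q).IsSymm := by
    rw [hPQS]
    exact (isSymm_diagonal _).mul_pow_mul (isSymm_transpose_mul_diagonal_mul _ _) k
  have hsymm : (Pl * Q).IsSymm := by
    refine isSymm_of_tendsto (l := atTop)
      (fun T => isSymm_sum_smul_mul (s := Finset.range T) (fun k => α * (1 - α) ^ k) (M := (P ^ ·)) hPowQ)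
      fun i j => ?_
    simpa [Q, mul_diagonal, Matrix.sum_apply] using (hlim i j).mul_const (dv j)⁻¹
  refine ⟨hsymm, fun i j => ?_⟩
  simpa only [Q, mul_diagonal, div_eq_mul_inv] using hsymm.apply j i

theorem rwr_limit_mul_inv_degree_isSymm
    (m n : ℕ) (H : Matrix (Fin (m + n)) (Fin n) ℝ)
    (w de : Fin (m + n) → ℝ) (dv : Fin n → ℝ)
    (hw : ∀ i, 0 < w i) (hde : ∀ i, 0 < de i) (hdv : ∀ j, 0 < dv j)
    (P : Matrix (Fin n) (Fin n) ℝ)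
    (hP : P = diagonal (fun j => (dv j)⁻¹) * Hᵀ * diagonal w *
        diagonal (fun i => (de i)⁻¹) * H)
    (α : ℝ) (hα : 0 ≤ α) (hα1 : α < 1)
    (Pl : Matrix (Fin n) (Fin n) ℝ)
    (hlim : ∀ i j, Tendsto
      (fun T : ℕ => ∑ k ∈ Finset.range T, α * (1 - α) ^ k * (P ^ k) i j)
      atTop (nhds (Pl i j))) :
    (Pl * diagonal (fun j => (dv j)⁻¹)).IsSymm ∧
      ∀ i j : Fin n, Pl i j / dv j = Pl j i / dv i :=
  rwr_limit_mul_inv_degree_isSymm_general m n H w de dv P hP α Pl hlim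
end

section
/- Low-rank approximation guarantee (Theorem 1, node case): Let H̃ = UΣVᵀ be a reduced SVD as above with singular values σ_1 ≥ … ≥ σ_n, let Σ̂ be the diagonal matrix with entries f(σ_j) where f(σ) = Σ_{i=0}^{T−1} α(1−α)^i σ^{2i} + (1−α)^T σ^{2T}, and vol > 0 a positive scalar. Define F = √vol · D_v^{-1/2} V Σ̂^{1/2} and F_r = √vol · D_v^{-1/2} V_r Σ̂_r^{1/2}, where V_r consists of the first r columns of V and Σ̂_r the corresponding r×r diagonal block. Then ‖tlog°(F_r F_rᵀ) − tlog°(F Fᵀ)‖_F² ≤ [ ‖D_v^{1/2}‖_F² ‖D_v^{-1/2}‖_F² Σ_{i=r+1}^{n} Σ̂[i,i] ]², where vol = ‖D_v^{1/2}‖_F². -/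
/-!
`tlog` is 1-Lipschitz, so the error is entrywise bounded by that of
`F_r F_rᵀ - F Fᵀ = -vol • D_v^{-1/2} V_{>r} Σ̂_{>r} V_{>r}ᵀ D_v^{-1/2}`.
Entries of an orthogonal matrix have absolute value at most 1, so the `(a, b)` entry of this
matrix is at most `vol · d_a^{-1/2} d_b^{-1/2} · ∑_{i > r} Σ̂ᵢᵢ`: a rank-one bound, whose
squared Frobenius norm is `(vol · ‖D_v^{-1/2}‖_F² · ∑_{i > r} Σ̂ᵢᵢ)²`.
-/

open Matrix

noncomputable def tlog (x : ℝ) : ℝ := Real.log (max x 1)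

noncomputable def frobNorm {a b : Type*} [Fintype a] [Fintype b]
    (M : Matrix a b ℝ) : ℝ := Real.sqrt (∑ i, ∑ j, (M i j) ^ 2)

open Finset

lemma log_sub_log_le_abs_sub {x y : ℝ} (hx : 0 < x) (hy : 1 ≤ y) :
    Real.log x - Real.log y ≤ |x - y| := by
  have hy0 : 0 < y := by linarith
  calc Real.log x - Real.log y = Real.log (x / y) := (Real.log_div hx.ne' hy0.ne').symm
    _ ≤ x / y - 1 := Real.log_le_sub_one_of_pos (by positivity)
    _ = (x - y) / y := by field_simp
    _ ≤ |x - y| / y := by gcongr; exact le_abs_self _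
    _ ≤ |x - y| := div_le_self (abs_nonneg _) hy

lemma abs_tlog_sub_tlog_le (x y : ℝ) : |tlog x - tlog y| ≤ |x - y| := by
  have hlog : |tlog x - tlog y| ≤ |max x 1 - max y 1| := by
    have hpos : ∀ z : ℝ, 0 < max z 1 := fun z => lt_max_of_lt_right one_pos
    refine abs_sub_le_iff.2 ⟨?_, ?_⟩
    · exact log_sub_log_le_abs_sub (hpos x) (le_max_right _ _)
    · rw [abs_sub_comm]
      exact log_sub_log_le_abs_sub (hpos y) (le_max_right _ _)
  exact hlog.trans (abs_max_sub_max_le_abs x y 1)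

section Frobenius

variable {m ι : Type*} [Fintype m] [Fintype ι]

lemma frobNorm_sq (M : Matrix m ι ℝ) : frobNorm M ^ 2 = ∑ i, ∑ j, M i j ^ 2 :=
  Real.sq_sqrt (by positivity)

lemma frobNorm_diagonal_sq [DecidableEq m] (d : m → ℝ) :
    frobNorm (diagonal d) ^ 2 = ∑ i, d i ^ 2 := by
  rw [frobNorm_sq]
  refine sum_congr rfl fun i _ => ?_
  rw [sum_eq_single i (fun j _ hj => by simp [diagonal_apply_ne _ hj.symm]) (by simp)]
  simp

lemma frobNorm_sq_le_of_abs_le_mul {M : Matrix m ι ℝ} {u : m → ℝ} {v : ι → ℝ}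
    (h : ∀ i j, |M i j| ≤ u i * v j) :
    frobNorm M ^ 2 ≤ (∑ i, u i ^ 2) * ∑ j, v j ^ 2 := by
  rw [frobNorm_sq, sum_mul_sum]
  refine sum_le_sum fun i _ => sum_le_sum fun j _ => ?_
  rw [← mul_pow, ← sq_abs]
  exact pow_le_pow_left₀ (abs_nonneg _) (h i j) 2

end Frobenius

lemma ppr_polynomial_nonneg {α : ℝ} (hα : 0 ≤ α) (hα1 : α ≤ 1) (T : ℕ) (x : ℝ) :
    0 ≤ (∑ i ∈ range T, α * (1 - α) ^ i * x ^ (2 * i)) + (1 - α) ^ T * x ^ (2 * T) := by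
  have h1α : 0 ≤ 1 - α := by linarith
  simp only [pow_mul]
  positivity

noncomputable def scaledFactor {m ι : Type*} [Fintype m] [Fintype ι] [DecidableEq m]
    [DecidableEq ι] (t : ℝ) (c : m → ℝ) (A : Matrix m ι ℝ) (g : ι → ℝ) : Matrix m ι ℝ :=
  Real.sqrt t • (diagonal c * A * diagonal fun k => Real.sqrt (g k))

lemma scaledFactor_mul_transpose_apply {m ι : Type*} [Fintype m] [Fintype ι] [DecidableEq m]
    [DecidableEq ι] {t : ℝ} (ht : 0 ≤ t) (c : m → ℝ) (A : Matrix m ι ℝ) {g : ι → ℝ}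
    (hg : ∀ k, 0 ≤ g k) (a b : m) :
    (scaledFactor t c A g * (scaledFactor t c A g)ᵀ) a b =
      t * (c a * c b * ∑ k, A a k * A b k * g k) := by
  rw [mul_apply, mul_sum, mul_sum]
  simp only [scaledFactor, transpose_apply, Matrix.smul_apply, smul_eq_mul, mul_diagonal,
    diagonal_mul]
  refine sum_congr rfl fun k _ => ?_
  linear_combination (c a * c b * A a k * A b k * (Real.sqrt (g k) * Real.sqrt (g k))) *
      Real.mul_self_sqrt ht + t * (c a * c b * (A a k * A b k)) * Real.mul_self_sqrt (hg k)

lemma sum_castLE_add_sum_filter_le {M : Type*} [AddCommMonoid M] {r n : ℕ} (hr : r ≤ n)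
    (h : Fin n → M) :
    ∑ k : Fin r, h (k.castLE hr) + ∑ k ∈ univ.filter (fun k : Fin n => r ≤ (k : ℕ)), h k =
      ∑ k, h k := by
  have hmap : univ.map (Fin.castLEEmb hr) = univ.filter (fun k : Fin n => ¬ r ≤ (k : ℕ)) := by
    ext k
    simp only [mem_map, mem_univ, true_and, mem_filter, not_le]
    exact ⟨by rintro ⟨j, rfl⟩; exact j.isLt, fun hk => ⟨⟨k, hk⟩, rfl⟩⟩
  rw [← sum_filter_not_add_sum_filter univ (fun k : Fin n => r ≤ (k : ℕ)), ← hmap, sum_map]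
  rfl

lemma abs_sum_mul_mul_le_of_mul_transpose_eq_one {n : Type*} [Fintype n] [DecidableEq n]
    {V : Matrix n n ℝ} (hV : V * Vᵀ = 1) {g : n → ℝ} (hg : ∀ k, 0 ≤ g k) (s : Finset n)
    (a b : n) : |∑ k ∈ s, V a k * V b k * g k| ≤ ∑ k ∈ s, g k := by
  have hU : V ∈ unitaryGroup n ℝ := by
    rwa [mem_unitaryGroup_iff, star_eq_conjTranspose, conjTranspose_eq_transpose_of_trivial]
  have hentry : ∀ i k, |V i k| ≤ 1 := fun i k => entry_norm_bound_of_unitary hU i k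
  refine (abs_sum_le_sum_abs _ _).trans (sum_le_sum fun k _ => ?_)
  rw [abs_mul, abs_mul, abs_of_nonneg (hg k)]
  have h1 : |V a k| * |V b k| ≤ 1 :=
    mul_le_one₀ (hentry a k) (abs_nonneg _) (hentry b k)
  nlinarith [hg k]

lemma scaledFactor_truncate_entry_le {n r : ℕ} (hr : r ≤ n) {t : ℝ} (ht : 0 ≤ t)
    {c : Fin n → ℝ} (hc : ∀ j, 0 ≤ c j) {V : Matrix (Fin n) (Fin n) ℝ} (hV : V * Vᵀ = 1)
    {g : Fin n → ℝ} (hg : ∀ k, 0 ≤ g k) (a b : Fin n) :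
    |(scaledFactor t c (V.submatrix id (Fin.castLE hr)) (g ∘ Fin.castLE hr) *
        (scaledFactor t c (V.submatrix id (Fin.castLE hr)) (g ∘ Fin.castLE hr))ᵀ) a b -
      (scaledFactor t c V g * (scaledFactor t c V g)ᵀ) a b| ≤
      t * (c a * c b * ∑ k ∈ univ.filter (fun k : Fin n => r ≤ (k : ℕ)), g k) := by
  rw [scaledFactor_mul_transpose_apply ht _ _ hg,
    scaledFactor_mul_transpose_apply (g := g ∘ Fin.castLE hr) ht _ _ (fun k => hg _),
    ← sum_castLE_add_sum_filter_le hr]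
  simp only [submatrix_apply, id, Function.comp_apply]
  have hcab : 0 ≤ c a * c b := mul_nonneg (hc a) (hc b)
  rw [← mul_sub, ← mul_sub, sub_add_cancel_left, abs_mul, abs_mul, abs_neg, abs_of_nonneg ht,
    abs_of_nonneg hcab]
  gcongr
  exact abs_sum_mul_mul_le_of_mul_transpose_eq_one hV hg _ a b

theorem low_rank_approximation_guarantee_node_general
    (n r T : ℕ) (hr : r ≤ n)
    (α : ℝ) (hα : 0 ≤ α) (hα1 : α < 1)
    (dv : Fin n → ℝ) (hdv : ∀ j, 0 < dv j)
    (V : Matrix (Fin n) (Fin n) ℝ) (hV' : V * Vᵀ = 1)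
    (σ : Fin n → ℝ)
    (f : ℝ → ℝ)
    (hf : f = fun x => (∑ i ∈ Finset.range T, α * (1 - α) ^ i * x ^ (2 * i)) +
      (1 - α) ^ T * x ^ (2 * T))
    (vol : ℝ) (hvol : vol = ∑ i, dv i)
    (F : Matrix (Fin n) (Fin n) ℝ)
    (hF : F = Real.sqrt vol • (diagonal (fun j => (Real.sqrt (dv j))⁻¹) * V *
      diagonal (fun j => Real.sqrt (f (σ j)))))
    (Fr : Matrix (Fin n) (Fin r) ℝ)
    (hFr : Fr = Real.sqrt vol • (diagonal (fun j => (Real.sqrt (dv j))⁻¹) *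
      (of fun (i : Fin n) (j : Fin r) => V i (Fin.castLE hr j)) *
      diagonal (fun j : Fin r => Real.sqrt (f (σ (Fin.castLE hr j)))))) :
    frobNorm ((Fr * Frᵀ).map tlog - (F * Fᵀ).map tlog) ^ 2 ≤
      (frobNorm (diagonal (fun j => Real.sqrt (dv j))) ^ 2 *
        frobNorm (diagonal (fun j => (Real.sqrt (dv j))⁻¹)) ^ 2 *
        ∑ i ∈ Finset.univ.filter (fun i : Fin n => r ≤ (i : ℕ)), f (σ i)) ^ 2 := by
  set c : Fin n → ℝ := fun j => (Real.sqrt (dv j))⁻¹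
  set S := ∑ i ∈ Finset.univ.filter (fun i : Fin n => r ≤ (i : ℕ)), f (σ i)
  have hf_nonneg : ∀ x, 0 ≤ f x := hf ▸ ppr_polynomial_nonneg hα hα1.le T
  have hvol_nonneg : 0 ≤ vol := hvol ▸ sum_nonneg fun i _ => (hdv i).le
  have hF' : F = scaledFactor vol c V (fun j => f (σ j)) := hF
  have hFr' : Fr = scaledFactor vol c (V.submatrix id (Fin.castLE hr))
      ((fun j => f (σ j)) ∘ Fin.castLE hr) := hFr
  have hentry : ∀ a b, |((Fr * Frᵀ).map tlog - (F * Fᵀ).map tlog) a b| ≤ vol * S * c a * c b :=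
    fun a b => calc
      _ ≤ |(Fr * Frᵀ) a b - (F * Fᵀ) a b| := abs_tlog_sub_tlog_le _ _
      _ ≤ vol * (c a * c b * S) := hF' ▸ hFr' ▸ scaledFactor_truncate_entry_le hr hvol_nonneg
            (fun j => by positivity) hV' (fun j => hf_nonneg _) a b
      _ = vol * S * c a * c b := by ring
  have hvol_eq : frobNorm (diagonal fun j => Real.sqrt (dv j)) ^ 2 = vol := by
    simp only [frobNorm_diagonal_sq, Real.sq_sqrt (hdv _).le, hvol]
  rw [hvol_eq, frobNorm_diagonal_sq]
  refine (frobNorm_sq_le_of_abs_le_mul (u := fun a => vol * S * c a) hentry).trans_eq ?_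
  simp only [mul_pow _ (c _), ← mul_sum]
  ring

theorem low_rank_approximation_guarantee_node
    (n r T : ℕ) (hr : r ≤ n)
    (α : ℝ) (hα : 0 ≤ α) (hα1 : α < 1)
    (dv : Fin n → ℝ) (hdv : ∀ j, 0 < dv j)
    (V : Matrix (Fin n) (Fin n) ℝ) (hV : Vᵀ * V = 1) (hV' : V * Vᵀ = 1)
    (σ : Fin n → ℝ) (hσ : ∀ j, 0 ≤ σ j) (hσa : Antitone σ)
    (f : ℝ → ℝ)
    (hf : f = fun x => (∑ i ∈ Finset.range T, α * (1 - α) ^ i * x ^ (2 * i)) +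
      (1 - α) ^ T * x ^ (2 * T))
    (vol : ℝ) (hvol : vol = ∑ i, dv i)
    (F : Matrix (Fin n) (Fin n) ℝ)
    (hF : F = Real.sqrt vol • (diagonal (fun j => (Real.sqrt (dv j))⁻¹) * V *
      diagonal (fun j => Real.sqrt (f (σ j)))))
    (Fr : Matrix (Fin n) (Fin r) ℝ)
    (hFr : Fr = Real.sqrt vol • (diagonal (fun j => (Real.sqrt (dv j))⁻¹) *
      (of fun (i : Fin n) (j : Fin r) => V i (Fin.castLE hr j)) *
      diagonal (fun j : Fin r => Real.sqrt (f (σ (Fin.castLE hr j)))))) :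
    frobNorm ((Fr * Frᵀ).map tlog - (F * Fᵀ).map tlog) ^ 2 ≤
      (frobNorm (diagonal (fun j => Real.sqrt (dv j))) ^ 2 *
        frobNorm (diagonal (fun j => (Real.sqrt (dv j))⁻¹)) ^ 2 *
        ∑ i ∈ Finset.univ.filter (fun i : Fin n => r ≤ (i : ℕ)), f (σ i)) ^ 2 :=
  low_rank_approximation_guarantee_node_general n r T hr α hα hα1 dv hdv V hV' σ f hf vol hvol F hF
    Fr hFr
end
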